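/- arXiv:1607.04001 — 4 statements merged into one kernel-verified Lean document; each statement's English description precedes it below -/
import Mathlib

section
/- Let m, n ≥ 1. If there is a hamiltonian path from the square ι to the square τ in the m×n projective checkerboard B(m,n), then there is a hamiltonian path from the inverse of τ to the inverse of ι in B(m,n). -/
/-!
Inversion `σ ↦ σ⁻¹` reverses every edge of the board: `(σE)⁻¹E = σ⁻¹` and `(σN)⁻¹N = σ⁻¹`, the
wrap-around moves included. So inverting every square of a hamiltonian path from `ι` to `τ` and
reading the result backwards gives a hamiltonian path from `τ⁻¹` to `ι⁻¹`.
-/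

namespace ProjBoard

/-- `(p,q)` is a square of the `m × n` board. -/
def Sq (m n : ℕ) (s : ℕ × ℕ) : Prop := s.1 < m ∧ s.2 < n

/-- The east move on the `m × n` projective checkerboard. -/
def moveE (m n : ℕ) (s : ℕ × ℕ) : ℕ × ℕ :=
  if s.1 < m - 1 then (s.1 + 1, s.2) else (0, n - 1 - s.2)

/-- The north move on the `m × n` projective checkerboard. -/
def moveN (m n : ℕ) (s : ℕ × ℕ) : ℕ × ℕ :=
  if s.2 < n - 1 then (s.1, s.2 + 1) else (m - 1 - s.1, 0)

/-- Directed edge of the board: from a square `s` to `sE` or `sN`. -/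
def Edge (m n : ℕ) (s t : ℕ × ℕ) : Prop :=
  Sq m n s ∧ (t = moveE m n s ∨ t = moveN m n s)

/-- A hamiltonian path, recorded as the list of squares it visits in order. -/
def IsHamPath (m n : ℕ) (l : List (ℕ × ℕ)) : Prop :=
  l.Chain' (Edge m n) ∧ l.Nodup ∧ ∀ s, Sq m n s ↔ s ∈ l

/-- A hamiltonian path with initial square `ι` and terminal square `τ`. -/
def HamPathFromTo (m n : ℕ) (ι τ : ℕ × ℕ) (l : List (ℕ × ℕ)) : Prop :=
  IsHamPath m n l ∧ l.head? = some ι ∧ l.getLast? = some τ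

/-- The square `s` travels east in the hamiltonian path `l`:
the edge from `s` to `sE` belongs to `l`. -/
def TravelsEast (m n : ℕ) (l : List (ℕ × ℕ)) (s : ℕ × ℕ) : Prop :=
  ∃ i : ℕ, l[i]? = some s ∧ l[i + 1]? = some (moveE m n s)

/-- The square `s` travels north in the hamiltonian path `l`:
the edge from `s` to `sN` belongs to `l`. -/
def TravelsNorth (m n : ℕ) (l : List (ℕ × ℕ)) (s : ℕ × ℕ) : Prop :=
  ∃ i : ℕ, l[i]? = some s ∧ l[i + 1]? = some (moveN m n s)

/-- Two squares lie in the same (direction-forcing) diagonal. -/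
def SameDiag (m n : ℕ) (s t : ℕ × ℕ) : Prop :=
  s.1 + s.2 = t.1 + t.2 ∨ s.1 + s.2 + (t.1 + t.2) = m + n - 3

/-- The southeasternmost square of the subdiagonal `S_b`. -/
def tauPlus (m n b : ℕ) : ℕ × ℕ :=
  if b ≤ m - 1 then (b, 0) else (m - 1, b - (m - 1))

def inv (m n : ℕ) (s : ℕ × ℕ) : ℕ × ℕ := (m - 1 - s.1, n - 1 - s.2)

section Inversion

variable {m n : ℕ} {s t : ℕ × ℕ}

lemma Sq.inv (hs : Sq m n s) : Sq m n (inv m n s) := by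
  obtain ⟨h1, h2⟩ := hs
  constructor <;> simp only [ProjBoard.inv] <;> omega

lemma inv_inv (hs : Sq m n s) : inv m n (inv m n s) = s := by
  obtain ⟨h1, h2⟩ := hs
  simp only [inv, Prod.ext_iff]
  omega

lemma moveE_inv_moveE (hs : Sq m n s) : moveE m n (inv m n (moveE m n s)) = inv m n s := by
  obtain ⟨p, q⟩ := s
  obtain ⟨hp, hq⟩ : p < m ∧ q < n := hs
  simp only [inv, moveE]
  split_ifs <;> dsimp only at * <;> simp only [Prod.mk.injEq, and_true] <;> omega

lemma moveN_inv_moveN (hs : Sq m n s) : moveN m n (inv m n (moveN m n s)) = inv m n s := by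
  obtain ⟨p, q⟩ := s
  obtain ⟨hp, hq⟩ : p < m ∧ q < n := hs
  simp only [inv, moveN]
  split_ifs <;> dsimp only at * <;> simp only [Prod.mk.injEq, true_and] <;> omega

lemma Sq.moveE (hs : Sq m n s) : Sq m n (moveE m n s) := by
  obtain ⟨h1, h2⟩ := hs
  unfold ProjBoard.moveE
  split_ifs <;> constructor <;> dsimp only <;> omega

lemma Sq.moveN (hs : Sq m n s) : Sq m n (moveN m n s) := by
  obtain ⟨h1, h2⟩ := hs
  unfold ProjBoard.moveN
  split_ifs <;> constructor <;> dsimp only <;> omega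

lemma Edge.inv (h : Edge m n s t) : Edge m n (inv m n t) (inv m n s) := by
  obtain ⟨hs, rfl | rfl⟩ := h
  · exact ⟨hs.moveE.inv, Or.inl (moveE_inv_moveE hs).symm⟩
  · exact ⟨hs.moveN.inv, Or.inr (moveN_inv_moveN hs).symm⟩

lemma IsHamPath.map_inv_reverse {l : List (ℕ × ℕ)} (hl : IsHamPath m n l) :
    IsHamPath m n (l.map (inv m n)).reverse := by
  obtain ⟨hchain, hnodup, hmem⟩ := hl
  refine ⟨?_, ?_, fun s => ?_⟩
  · rw [List.Chain', List.isChain_reverse, List.isChain_map]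
    exact List.IsChain.imp (fun _ _ => Edge.inv) hchain
  · refine List.nodup_reverse.mpr (hnodup.map_on fun x hx y hy hxy => ?_)
    rw [← inv_inv ((hmem x).mpr hx), hxy, inv_inv ((hmem y).mpr hy)]
  · simp only [List.mem_reverse, List.mem_map]
    refine ⟨fun hs => ⟨inv m n s, (hmem _).mp hs.inv, inv_inv hs⟩, ?_⟩
    rintro ⟨t, ht, rfl⟩
    exact ((hmem t).mpr ht).inv

end Inversion

theorem inverseHP_general (m n : ℕ) (ι τ : ℕ × ℕ)
    (h : ∃ l, HamPathFromTo m n ι τ l) :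
    ∃ l, HamPathFromTo m n (m - 1 - τ.1, n - 1 - τ.2) (m - 1 - ι.1, n - 1 - ι.2) l := by
  obtain ⟨l, hl, hhead, hlast⟩ := h
  refine ⟨(l.map (inv m n)).reverse, hl.map_inv_reverse, ?_, ?_⟩
  · rw [List.head?_reverse, List.getLast?_map, hlast]
    rfl
  · rw [List.getLast?_reverse, List.head?_map, hhead]
    rfl

theorem inverseHP (m n : ℕ) (hm : 1 ≤ m) (hn : 1 ≤ n) (ι τ : ℕ × ℕ)
    (h : ∃ l, HamPathFromTo m n ι τ l) :
    ∃ l, HamPathFromTo m n (m - 1 - τ.1, n - 1 - τ.2) (m - 1 - ι.1, n - 1 - ι.2) l :=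
  inverseHP_general m n ι τ h

end ProjBoard
end

section
/- Let m, n ≥ 1 and let H be a hamiltonian path in the m×n projective checkerboard B(m,n). Then for every non-terminal diagonal D of B(m,n), either every square of D travels north in H, or every square of D travels east in H. -/
/-!
For a square `s`, let `diagNext s` be the square whose north neighbour is `sE`; it lies on the
diagonal of `s`. If `s` travels east, the path enters `sE` from `s`, so `diagNext s` cannot travel
north and, unless it is the terminal square, travels east. Iterating `diagNext` from any square
runs through its whole diagonal: down one subdiagonal to its southeast end, over to the northwest
end of the complementary subdiagonal, down that one, and back. Hence one square of a non-terminal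
diagonal that does not travel north forces every square of that diagonal to travel east.
-/

theorem List.Nodup.eq_of_getElem?_succ_eq {α : Type*} {l : List α} (hl : l.Nodup) {i j : ℕ}
    {a b c : α} (hi : l[i]? = some a) (hj : l[j]? = some b) (hi' : l[i + 1]? = some c)
    (hj' : l[j + 1]? = some c) : a = b := by
  have hlen : i + 1 < l.length := (List.getElem?_eq_some_iff.mp hi').1
  have hij : i = j := by
    simpa using (List.getElem?_inj hlen hl).mp (hi'.trans hj'.symm)
  subst hij
  exact Option.some.inj (hi.symm.trans hj)

namespace ProjBoard

/-- The northwesternmost square of the subdiagonal `S_b`. -/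
def tauMinus (n b : ℕ) : ℕ × ℕ :=
  if b ≤ n - 1 then (0, b) else (b - (n - 1), n - 1)

/-- The square `t` with `tN = sE`. -/
def diagNext (m n : ℕ) (s : ℕ × ℕ) : ℕ × ℕ :=
  if s.1 < m - 1 then
    if 1 ≤ s.2 then (s.1 + 1, s.2 - 1) else (m - 2 - s.1, n - 1)
  else
    if s.2 < n - 1 then (0, n - 2 - s.2) else (m - 1, n - 1)

abbrev DiagReach (m n : ℕ) : ℕ × ℕ → ℕ × ℕ → Prop :=
  Relation.ReflTransGen fun s t => diagNext m n s = t

section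

variable {m n : ℕ} {s t u : ℕ × ℕ}

theorem SameDiag.symm (h : SameDiag m n s t) : SameDiag m n t s := by
  unfold SameDiag at *; omega

theorem SameDiag.trans (h₁ : SameDiag m n s t) (h₂ : SameDiag m n t u) : SameDiag m n s u := by
  unfold SameDiag at *; omega

theorem Sq.diagNext (hs : Sq m n s) : Sq m n (diagNext m n s) := by
  obtain ⟨p, q⟩ := s
  simp only [Sq, ProjBoard.diagNext] at *
  split_ifs <;> omega

theorem sameDiag_diagNext (hs : Sq m n s) : SameDiag m n s (diagNext m n s) := by
  obtain ⟨p, q⟩ := s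
  simp only [Sq, diagNext, SameDiag] at *
  split_ifs <;> omega

theorem moveN_diagNext (hs : Sq m n s) : moveN m n (diagNext m n s) = moveE m n s := by
  obtain ⟨p, q⟩ := s
  simp only [Sq] at hs
  simp only [diagNext, moveN, moveE]
  split_ifs <;> simp only [Prod.mk.injEq, true_and] at * <;> omega

theorem diagNext_tauPlus (hm : 1 ≤ m) (hn : 1 ≤ n) {b : ℕ} (hb : b ≤ m + n - 3) :
    diagNext m n (tauPlus m n b) = tauMinus n (m + n - 3 - b) := by
  unfold tauPlus tauMinus diagNext
  split_ifs <;> simp only [Prod.mk.injEq, true_and, and_true] at * <;> omega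

theorem diagReach_of_fst_le {p q p' q' : ℕ} (hq : q < n) (hp' : p' < m) (hpp' : p ≤ p')
    (hsum : p' + q' = p + q) : DiagReach m n (p, q) (p', q') := by
  obtain ⟨d, rfl⟩ := Nat.exists_eq_add_of_le hpp'
  induction d generalizing p q with
  | zero =>
    obtain rfl : q' = q := by omega
    rfl
  | succ d ih =>
    have hnext : diagNext m n (p, q) = (p + 1, q - 1) := by
      simp only [diagNext]
      split_ifs <;> simp only [Prod.mk.injEq] <;> omega
    rw [show p + (d + 1) = p + 1 + d by omega]
    exact .head hnext (ih (by omega) (by omega) (by omega) (by omega))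

theorem sq_tauPlus (hm : 1 ≤ m) (hn : 1 ≤ n) {b : ℕ} (hb : b ≤ m + n - 2) :
    Sq m n (tauPlus m n b) := by
  unfold tauPlus Sq
  split_ifs <;> dsimp only <;> omega

theorem tauPlus_fst_add_snd (b : ℕ) : (tauPlus m n b).1 + (tauPlus m n b).2 = b := by
  unfold tauPlus
  split_ifs <;> dsimp only <;> omega

theorem diagReach_tauPlus (hs : Sq m n s) : DiagReach m n s (tauPlus m n (s.1 + s.2)) := by
  obtain ⟨p, q⟩ := s
  obtain ⟨hp, hq⟩ := hs
  unfold tauPlus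
  split_ifs <;> exact diagReach_of_fst_le hq (by omega) (by omega) (by omega)

theorem diagReach_of_tauMinus (ht : Sq m n t) : DiagReach m n (tauMinus n (t.1 + t.2)) t := by
  obtain ⟨p, q⟩ := t
  obtain ⟨hp, hq⟩ := ht
  unfold tauMinus
  split_ifs <;> exact diagReach_of_fst_le (by omega) hp (by omega) (by omega)

theorem diagReach_of_complementary (hs : Sq m n s) (ht : Sq m n t)
    (h : s.1 + s.2 + (t.1 + t.2) = m + n - 3) : DiagReach m n s t := by
  have hstep := diagNext_tauPlus (Nat.one_le_of_lt hs.1) (Nat.one_le_of_lt hs.2)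
    (b := s.1 + s.2) (by omega)
  rw [show m + n - 3 - (s.1 + s.2) = t.1 + t.2 by omega] at hstep
  exact (diagReach_tauPlus hs).trans (.head hstep (diagReach_of_tauMinus ht))

theorem diagReach_of_sameDiag (hs : Sq m n s) (ht : Sq m n t) (h : SameDiag m n s t) :
    DiagReach m n s t := by
  unfold Sq at hs ht
  rcases h with h | h
  · by_cases hcorner : s.1 + s.2 = m + n - 2
    · obtain rfl : s = t := Prod.ext (by omega) (by omega)
      exact .refl
    · set u := tauPlus m n (m + n - 3 - (s.1 + s.2))
      have hu : Sq m n u := sq_tauPlus (by omega) (by omega) (by omega)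
      have hu_sum : u.1 + u.2 = m + n - 3 - (s.1 + s.2) := tauPlus_fst_add_snd _
      exact (diagReach_of_complementary hs hu (by omega)).trans
        (diagReach_of_complementary hu ht (by omega))
  · exact diagReach_of_complementary hs ht h

variable {l : List (ℕ × ℕ)} {τ : ℕ × ℕ}

theorem travelsEast_or_travelsNorth (hl : IsHamPath m n l) (hτ : l.getLast? = some τ)
    (hs : Sq m n s) (hsτ : s ≠ τ) : TravelsEast m n l s ∨ TravelsNorth m n l s := by
  obtain ⟨i, hi, rfl⟩ := List.getElem_of_mem ((hl.2.2 _).1 hs)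
  have hi' : i + 1 < l.length := by
    by_contra! h
    rw [List.getLast?_eq_getElem?, List.getElem?_eq_getElem (by omega)] at hτ
    exact hsτ (by simpa [show i = l.length - 1 by omega] using hτ)
  have hget : ∀ j (hj : j < l.length), l[j]? = some l[j] := fun j hj => List.getElem?_eq_getElem hj
  rcases (List.isChain_iff_getElem.mp hl.1 i hi').2 with h | h
  · exact .inl ⟨i, hget i hi, h ▸ hget (i + 1) hi'⟩
  · exact .inr ⟨i, hget i hi, h ▸ hget (i + 1) hi'⟩

theorem TravelsEast.diagNext (hl : IsHamPath m n l) (hτ : l.getLast? = some τ)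
    (hs : Sq m n s) (hne : diagNext m n s ≠ τ) (he : TravelsEast m n l s) :
    TravelsEast m n l (diagNext m n s) := by
  rcases travelsEast_or_travelsNorth hl hτ hs.diagNext hne with h | ⟨j, hj, hj'⟩
  · exact h
  obtain ⟨i, hi, hi'⟩ := he
  rw [moveN_diagNext hs] at hj'
  rw [← hl.2.1.eq_of_getElem?_succ_eq hi hj hi' hj']
  exact ⟨i, hi, hi'⟩

theorem TravelsEast.of_diagReach (hl : IsHamPath m n l) (hτ : l.getLast? = some τ)
    (hs : Sq m n s) (hsτ : ¬ SameDiag m n s τ) (he : TravelsEast m n l s)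
    (h : DiagReach m n s t) : TravelsEast m n l t := by
  suffices Sq m n t ∧ SameDiag m n s t ∧ TravelsEast m n l t from this.2.2
  induction h with
  | refl => exact ⟨hs, .inl rfl, he⟩
  | tail _ hstep ih =>
    obtain ⟨hu, hsu, hue⟩ := ih
    subst hstep
    have hsu' := hsu.trans (sameDiag_diagNext hu)
    exact ⟨hu.diagNext, hsu', hue.diagNext hl hτ hu (fun h => hsτ (h ▸ hsu'))⟩

end

theorem diagMustTravel_general (m n : ℕ)
    (l : List (ℕ × ℕ)) (τ : ℕ × ℕ)
    (hl : IsHamPath m n l) (hτ : l.getLast? = some τ)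
    (σ : ℕ × ℕ) (hnonterm : ¬ SameDiag m n σ τ) :
    (∀ s, Sq m n s → SameDiag m n s σ → TravelsNorth m n l s) ∨
    (∀ s, Sq m n s → SameDiag m n s σ → TravelsEast m n l s) := by
  refine or_iff_not_imp_left.2 fun hnorth => ?_
  simp only [not_forall] at hnorth
  obtain ⟨s, hs, hsσ, hsN⟩ := hnorth
  have hsτ : ¬ SameDiag m n s τ := fun h => hnonterm (hsσ.symm.trans h)
  have hsE : TravelsEast m n l s :=
    (travelsEast_or_travelsNorth hl hτ hs fun h => hsτ (h ▸ .inl rfl)).resolve_right hsN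
  intro t ht htσ
  exact hsE.of_diagReach hl hτ hs hsτ (diagReach_of_sameDiag hs ht (hsσ.trans htσ.symm))

theorem diagMustTravel (m n : ℕ) (hm : 1 ≤ m) (hn : 1 ≤ n)
    (l : List (ℕ × ℕ)) (τ : ℕ × ℕ)
    (hl : IsHamPath m n l) (hτ : l.getLast? = some τ)
    (σ : ℕ × ℕ) (hσ : Sq m n σ) (hnonterm : ¬ SameDiag m n σ τ) :
    (∀ s, Sq m n s → SameDiag m n s σ → TravelsNorth m n l s) ∨
    (∀ s, Sq m n s → SameDiag m n s σ → TravelsEast m n l s) :=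
  diagMustTravel_general m n l τ hl hτ σ hnonterm

end ProjBoard
end

section
/- Let m, n ≥ 1 and let H be a hamiltonian path in the m×n projective checkerboard B(m,n) with initial square ι and terminal square τ. Then the unique square σ with σE = ι lies in the same diagonal as τ; that is, the diagonal containing ιE^{−1} (and equivalently ιN^{−1}) is the terminal diagonal of H. -/
namespace ProjBoard

/-
The squares of subdiagonal index at least `d` and at most `m + n - 3 - d` form a band `B_d`.
Every edge either raises the subdiagonal index by one or wraps from `S_i` to `S_{m+n-2-i}`, so
a path enters `B_d` exactly at the squares of `S_d` and leaves it exactly at the squares of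
`S_{m+n-2-d}`. Prepending `σ` to the path (legitimate, since `σE = ι`) gives a path through
every square, so the number of entries minus the number of exits is `|S_d| - |S_{m+n-2-d}|`,
which vanishes by the central symmetry of the board. Hence `σ ∈ B_d ↔ τ ∈ B_d` for every `d`,
and these memberships determine the diagonal.
-/

theorem _root_.List.IsChain.add_sum_map_eq {α : Type*} {R : α → α → Prop} {f g h : α → ℕ}
    (hR : ∀ s t, R s t → f s + g t = f t + h t) :
    ∀ {a b : α} {l : List α}, (a :: l).IsChain R → (a :: l).getLast? = some b →
      f a + (l.map g).sum = f b + (l.map h).sum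
  | a, b, [], _, hb => by simp_all
  | a, b, c :: l, hl, hb => by
    rw [List.isChain_cons_cons] at hl
    rw [List.getLast?_cons_cons] at hb
    have ih := hl.2.add_sum_map_eq hR hb
    have hstep := hR a c hl.1
    simp only [List.map_cons, List.sum_cons]
    omega

def subdiag (s : ℕ × ℕ) : ℕ := s.1 + s.2

lemma subdiag_moveE {m n : ℕ} {s : ℕ × ℕ} (hs : Sq m n s) :
    subdiag (moveE m n s) = subdiag s + 1 ∨ subdiag s + subdiag (moveE m n s) = m + n - 2 := by
  obtain ⟨h1, h2⟩ := hs
  unfold moveE subdiag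
  split <;> simp <;> omega

lemma subdiag_moveN {m n : ℕ} {s : ℕ × ℕ} (hs : Sq m n s) :
    subdiag (moveN m n s) = subdiag s + 1 ∨ subdiag s + subdiag (moveN m n s) = m + n - 2 := by
  obtain ⟨h1, h2⟩ := hs
  unfold moveN subdiag
  split <;> simp <;> omega

lemma Edge.subdiag_step {m n : ℕ} {s t : ℕ × ℕ} (h : Edge m n s t) :
    subdiag t = subdiag s + 1 ∨ subdiag s + subdiag t = m + n - 2 := by
  obtain ⟨hs, rfl | rfl⟩ := h
  · exact subdiag_moveE hs
  · exact subdiag_moveN hs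

lemma Sq.subdiag_le {m n : ℕ} {s : ℕ × ℕ} (hs : Sq m n s) : subdiag s ≤ m + n - 2 := by
  unfold subdiag Sq at *
  omega

/-- Membership of a square of subdiagonal index `i` in the band `B_d`, where `N = m + n - 2`. -/
abbrev InBand (N d i : ℕ) : Prop := d ≤ i ∧ i + d < N

/-- A step `i → j` enters the band iff `j = d` and leaves it iff `j + d = N`. -/
lemma inBand_step {N d i j : ℕ} (hd : 2 * d + 1 ≤ N) (hij : j = i + 1 ∨ i + j = N) :
    (if InBand N d i then 1 else 0) + (if j = d then 1 else 0)
      = (if InBand N d j then 1 else 0) + (if j + d = N then 1 else 0) := by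
  unfold InBand
  split_ifs <;> omega

lemma sameDiag_of_forall_inBand_iff {m n : ℕ} {s t : ℕ × ℕ}
    (hs : subdiag s ≤ m + n - 2) (ht : subdiag t ≤ m + n - 2)
    (h : ∀ d, 2 * d + 1 ≤ m + n - 2 →
      (InBand (m + n - 2) d (subdiag s) ↔ InBand (m + n - 2) d (subdiag t))) :
    SameDiag m n s t := by
  -- `min i (m + n - 3 - i)` is the index of the diagonal containing `S_i`
  have hs' := h (min (subdiag s) (m + n - 3 - subdiag s))
  have ht' := h (min (subdiag t) (m + n - 3 - subdiag t))
  unfold InBand subdiag at *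
  unfold SameDiag
  omega

def reflect (m n : ℕ) (s : ℕ × ℕ) : ℕ × ℕ := (m - 1 - s.1, n - 1 - s.2)

lemma sq_reflect {m n : ℕ} {s : ℕ × ℕ} (hs : Sq m n s) : Sq m n (reflect m n s) := by
  unfold Sq reflect at *
  constructor <;> simp <;> omega

lemma reflect_reflect {m n : ℕ} {s : ℕ × ℕ} (hs : Sq m n s) :
    reflect m n (reflect m n s) = s := by
  unfold Sq reflect at *
  ext <;> simp <;> omega

lemma subdiag_reflect {m n : ℕ} {s : ℕ × ℕ} (hs : Sq m n s) :
    subdiag (reflect m n s) + subdiag s = m + n - 2 := by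
  unfold Sq subdiag reflect at *
  simp only
  omega

lemma perm_map_reflect {m n : ℕ} {l : List (ℕ × ℕ)} (hnd : l.Nodup)
    (hcov : ∀ s, Sq m n s ↔ s ∈ l) : (l.map (reflect m n)).Perm l := by
  have hsq : ∀ s ∈ l, Sq m n s := fun s hs => (hcov s).mpr hs
  refine (List.perm_ext_iff_of_nodup ?_ hnd).mpr fun x => ⟨fun hx => ?_, fun hx => ?_⟩
  · refine hnd.map_on fun x hx y hy hxy => ?_
    rw [← reflect_reflect (hsq x hx), hxy, reflect_reflect (hsq y hy)]
  · obtain ⟨y, hy, rfl⟩ := List.mem_map.mp hx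
    exact (hcov _).mp (sq_reflect (hsq y hy))
  · exact List.mem_map.mpr ⟨_, (hcov _).mp (sq_reflect (hsq x hx)), reflect_reflect (hsq x hx)⟩

lemma sum_subdiag_eq_sum_subdiag_compl {m n : ℕ} (d : ℕ) {l : List (ℕ × ℕ)} (hnd : l.Nodup)
    (hcov : ∀ s, Sq m n s ↔ s ∈ l) :
    (l.map fun s => if subdiag s = d then 1 else 0).sum
      = (l.map fun s => if subdiag s + d = m + n - 2 then 1 else 0).sum := by
  rw [← ((perm_map_reflect hnd hcov).map _).sum_eq, List.map_map]
  refine congrArg List.sum (List.map_congr_left fun s hs => ?_)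
  have := subdiag_reflect ((hcov s).mpr hs)
  simp only [Function.comp_apply]
  congr 1
  apply propext
  omega

theorem iotaEinvInTerminalDiag_general (m n : ℕ)
    (l : List (ℕ × ℕ)) (ι τ σ : ℕ × ℕ)
    (hl : HamPathFromTo m n ι τ l)
    (hσ : Sq m n σ) (hE : moveE m n σ = ι) :
    SameDiag m n σ τ := by
  obtain ⟨⟨hchain, hnd, hcov⟩, hhead, hlast⟩ := hl
  have hchain' : (σ :: l).IsChain (Edge m n) :=
    List.IsChain.cons hchain (by simp [hhead, Edge, hσ, hE])
  have hlast' : (σ :: l).getLast? = some τ := by simp [List.getLast?_cons, hlast]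
  have hτ : Sq m n τ := (hcov τ).mpr (List.mem_of_getLast? hlast)
  refine sameDiag_of_forall_inBand_iff hσ.subdiag_le hτ.subdiag_le fun d hd => ?_
  have htel := hchain'.add_sum_map_eq
    (f := fun s => if InBand (m + n - 2) d (subdiag s) then 1 else 0)
    (fun s t hst => inBand_step hd hst.subdiag_step) hlast'
  rw [sum_subdiag_eq_sum_subdiag_compl d hnd hcov] at htel
  simp only [Nat.add_right_cancel_iff] at htel
  split_ifs at htel <;> tauto

theorem iotaEinvInTerminalDiag (m n : ℕ) (hm : 1 ≤ m) (hn : 1 ≤ n)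
    (l : List (ℕ × ℕ)) (ι τ σ : ℕ × ℕ)
    (hl : HamPathFromTo m n ι τ l)
    (hσ : Sq m n σ) (hE : moveE m n σ = ι) :
    SameDiag m n σ τ :=
  iotaEinvInTerminalDiag_general m n l ι τ σ hl hσ hE

end ProjBoard
end

section
/- Suppose m, n ≥ 3 and S_a ∪ S_b (with a ≤ b and a+b = m+n−3) is the terminal diagonal of a hamiltonian path H in the m×n projective checkerboard B(m,n). Let (p,q) be a square in S_{b+1}. Then, following H forward from (p,q), the path eventually reaches a square of S_a, and the first square of S_a reached after (p,q) is the inverse of (p,q), namely (m−1−p, n−1−q). -/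
/-!
Call `p + q` the level of `(p,q)`. Every edge of `B(m,n)` either raises the level by one or jumps
to the inverse square, so along every edge `x → y` of a hamiltonian path, `x` and the inverse of
`y` lie on the same diagonal. Summing the indicator of a diagonal over the sources and over the
inverses of the targets of all edges, and using that inversion permutes the board, shows that the
inverse of the initial square lies on the terminal diagonal. Here this puts the initial square on
`S_{a+1} ∪ S_{b+1}`, so every square below `S_{a+1}` or above `S_{b+1}` is entered by the path.

The heart of the argument is a mirror property: if the path steps from `x` to `y` with `x` on or
above `S_{b+1}`, it also steps from the inverse of `y` to the inverse of `x`. Otherwise the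
inverse of `x` is entered from the wrong neighbour, which produces a step on a low row whose
mirror fails, and then the same configuration one row lower; on the bottom row the required
predecessor does not exist. East and north steps are exchanged by the transposition
`B(m,n) ≅ B(n,m)`.

Starting at `(p,q) ∈ S_{b+1}` the path therefore climbs by steps `s₀ → s₁ → ⋯ → s_r`, jumps to
the inverse of `s_r` and descends through the inverses of `s_{r-1}, …, s₀`: it meets only squares
above `S_{b+1}` or below `S_a` before reaching the inverse of `(p,q)`.
-/

namespace ProjBoard

section

variable {m n a b : ℕ} {l : List (ℕ × ℕ)} {s t : ℕ × ℕ}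

def inverse (m n : ℕ) (s : ℕ × ℕ) : ℕ × ℕ := (m - 1 - s.1, n - 1 - s.2)

lemma inverse_inverse (hs : Sq m n s) : inverse m n (inverse m n s) = s := by
  obtain ⟨h1, h2⟩ := hs
  simp only [inverse, Prod.ext_iff]
  omega

lemma sq_inverse (hs : Sq m n s) : Sq m n (inverse m n s) := by
  obtain ⟨h1, h2⟩ := hs
  simp only [Sq, inverse]
  omega

lemma Edge.sq_right (h : Edge m n s t) : Sq m n t := by
  obtain ⟨⟨h1, h2⟩, rfl | rfl⟩ := h
  · unfold moveE; split <;> simp only [Sq] <;> omega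
  · unfold moveN; split <;> simp only [Sq] <;> omega

lemma Edge.eq_inverse_or_step (h : Edge m n s t) :
    s = inverse m n t ∨ t = (s.1 + 1, s.2) ∨ t = (s.1, s.2 + 1) := by
  obtain ⟨⟨h1, h2⟩, rfl | rfl⟩ := h
  · unfold moveE; split
    · exact Or.inr (Or.inl rfl)
    · left; simp only [inverse, Prod.ext_iff]; omega
  · unfold moveN; split
    · exact Or.inr (Or.inr rfl)
    · left; simp only [inverse, Prod.ext_iff]; omega

lemma Edge.sameDiag_inverse_iff (h : Edge m n s t) (τ : ℕ × ℕ) :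
    SameDiag m n (inverse m n t) τ ↔ SameDiag m n s τ := by
  obtain ⟨hs1, hs2⟩ := h.1
  obtain ⟨ht1, ht2⟩ := h.sq_right
  rcases h.eq_inverse_or_step with rfl | rfl | rfl <;>
    simp only [SameDiag, inverse] <;> omega

lemma Edge.swap (h : Edge m n s t) : Edge n m s.swap t.swap := by
  obtain ⟨⟨h1, h2⟩, rfl | rfl⟩ := h
  · refine ⟨⟨h2, h1⟩, Or.inr ?_⟩
    simp only [moveE, moveN, Prod.fst_swap, Prod.snd_swap]; split_ifs <;> rfl
  · refine ⟨⟨h2, h1⟩, Or.inl ?_⟩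
    simp only [moveE, moveN, Prod.fst_swap, Prod.snd_swap]; split_ifs <;> rfl

section Lists

variable {α β M : Type*}

def Follows (l : List α) (x y : α) : Prop := ∃ i : ℕ, l[i]? = some x ∧ l[i + 1]? = some y

lemma follows_map_iff {f : α → β} (hf : Function.Injective f) {l : List α} {x y : α} :
    Follows (l.map f) (f x) (f y) ↔ Follows l x y := by
  simp [Follows, hf.eq_iff]

lemma exists_getElem?_succ {l : List α} {i : ℕ} {x : α} (hi : l[i]? = some x)
    (hx : l.getLast? ≠ some x) : ∃ y, l[i + 1]? = some y := by
  obtain ⟨hlt, rfl⟩ := List.getElem?_eq_some_iff.1 hi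
  by_cases h : i + 1 < l.length
  · exact ⟨l[i + 1], List.getElem?_eq_getElem h⟩
  · refine absurd ?_ hx
    rw [List.getLast?_eq_getElem?, show l.length - 1 = i by omega, List.getElem?_eq_getElem hlt]

lemma sum_map_add_eq_of_isChain [AddCommMonoid M] {f g : α → M} :
    ∀ {l : List α} {x y : α}, l.IsChain (fun u v => f u = g v) → l.head? = some x →
      l.getLast? = some y → (l.map f).sum + g x = (l.map g).sum + f y
  | [], _, _, _, hx, _ => by simp at hx
  | [z], x, y, _, hx, hy => by
    simp only [List.head?_cons, Option.some.injEq, List.getLast?_singleton] at hx hy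
    subst hx hy
    simp only [List.map_cons, List.map_nil, List.sum_cons, List.sum_nil, add_zero]
    exact add_comm _ _
  | z :: w :: t, x, y, hl, hx, hy => by
    simp only [List.head?_cons, Option.some.injEq] at hx
    subst hx
    rw [List.isChain_cons_cons] at hl
    have ih := sum_map_add_eq_of_isChain hl.2 rfl (by simpa using hy)
    simp only [List.map_cons, List.sum_cons] at ih ⊢
    calc f z + (f w + (t.map f).sum) + g z = (f w + (t.map f).sum + g w) + g z := by
          rw [hl.1]; abel
      _ = g z + (g w + (t.map g).sum) + f y := by rw [ih]; abel

end Lists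

namespace IsHamPath

variable (hl : IsHamPath m n l)
include hl

lemma sq_of_getElem? {i : ℕ} (h : l[i]? = some s) : Sq m n s :=
  (hl.2.2 s).2 (List.mem_of_getElem? h)

lemma exists_getElem? (hs : Sq m n s) : ∃ i : ℕ, l[i]? = some s :=
  List.mem_iff_getElem?.1 ((hl.2.2 s).1 hs)

lemma eq_of_getElem? {i j : ℕ} (hi : l[i]? = some s) (hj : l[j]? = some s) : i = j :=
  (List.getElem?_inj (List.getElem?_eq_some_iff.1 hi).1 hl.2.1).1 (hi.trans hj.symm)

lemma edge_of_follows (h : Follows l s t) : Edge m n s t := by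
  obtain ⟨i, hs, ht⟩ := h
  obtain ⟨hi, rfl⟩ := List.getElem?_eq_some_iff.1 hs
  obtain ⟨hi', rfl⟩ := List.getElem?_eq_some_iff.1 ht
  exact hl.1.getElem i hi'

lemma follows_cases (h : Follows l s t) :
    s = inverse m n t ∨ t = (s.1 + 1, s.2) ∨ t = (s.1, s.2 + 1) :=
  (hl.edge_of_follows h).eq_inverse_or_step

lemma follows_right_unique {t' : ℕ × ℕ} (h : Follows l s t) (h' : Follows l s t') : t = t' := by
  obtain ⟨i, hi, ht⟩ := h
  obtain ⟨j, hj, ht'⟩ := h'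
  obtain rfl := hl.eq_of_getElem? hi hj
  exact Option.some_inj.1 (ht.symm.trans ht')

lemma map_swap : IsHamPath n m (l.map Prod.swap) := by
  refine ⟨List.isChain_map _ |>.2 (hl.1.imp fun _ _ h => h.swap), hl.2.1.map Prod.swap_injective,
    fun s => ?_⟩
  rw [List.mem_map_swap, ← hl.2.2]
  exact And.comm

lemma map_inverse_perm : (l.map (inverse m n)).Perm l := by
  have hsq : ∀ s ∈ l, Sq m n s := fun s => (hl.2.2 s).2
  refine (List.perm_ext_iff_of_nodup (hl.2.1.map_on fun x hx y hy h => ?_) hl.2.1).2 fun s => ?_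
  · rw [← inverse_inverse (hsq x hx), h, inverse_inverse (hsq y hy)]
  · rw [List.mem_map, ← hl.2.2]
    constructor
    · rintro ⟨t, ht, rfl⟩
      exact sq_inverse (hsq t ht)
    · intro hs
      exact ⟨_, (hl.2.2 _).1 (sq_inverse hs), inverse_inverse hs⟩

lemma sameDiag_inverse_head {ι τ : ℕ × ℕ} (hι : l.head? = some ι) (hτ : l.getLast? = some τ) :
    SameDiag m n (inverse m n ι) τ := by
  classical
  let f : ℕ × ℕ → ℕ := fun s => if SameDiag m n s τ then 1 else 0
  have hchain : l.IsChain (fun x y => f x = f (inverse m n y)) :=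
    hl.1.imp fun x y hxy => by simp only [f, hxy.sameDiag_inverse_iff]
  have key := sum_map_add_eq_of_isChain (g := f ∘ inverse m n) hchain hι hτ
  rw [← List.map_map, (hl.map_inverse_perm.map f).sum_eq] at key
  have hf : f (inverse m n ι) = f τ := add_left_cancel key
  by_contra h
  simp [f, h, show SameDiag m n τ τ from Or.inl rfl] at hf

end IsHamPath

structure StartsInBand (m n a b : ℕ) (l : List (ℕ × ℕ)) : Prop where
  isHamPath : IsHamPath m n l
  le : a ≤ b
  add_eq : a + b = m + n - 3
  head_level : ∀ ι ∈ l.head?, a + 1 ≤ ι.1 + ι.2 ∧ ι.1 + ι.2 ≤ b + 1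

namespace StartsInBand

lemma of_terminal {τ : ℕ × ℕ} (hl : IsHamPath m n l) (hmn : 3 ≤ m + n) (hab : a ≤ b)
    (habsum : a + b = m + n - 3)
    (hτ : l.getLast? = some τ) (hterm : τ.1 + τ.2 = a ∨ τ.1 + τ.2 = b) :
    StartsInBand m n a b l where
  isHamPath := hl
  le := hab
  add_eq := habsum
  head_level ι hι := by
    have hdiag := hl.sameDiag_inverse_head hι hτ
    obtain ⟨h1, h2⟩ := (hl.2.2 ι).2 (List.mem_of_mem_head? hι)
    simp only [SameDiag, inverse] at hdiag
    omega

variable (H : StartsInBand m n a b l)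
include H

lemma map_swap : StartsInBand n m a b (l.map Prod.swap) where
  isHamPath := H.isHamPath.map_swap
  le := H.le
  add_eq := by rw [Nat.add_comm n, H.add_eq]
  head_level ι hι := by
    rw [List.head?_map, Option.mem_map] at hι
    obtain ⟨ι, hι, rfl⟩ := hι
    have := H.head_level ι hι
    simp only [Prod.fst_swap, Prod.snd_swap]
    omega

lemma exists_follows (hs : Sq m n s) (hout : s.1 + s.2 ≤ a ∨ b + 2 ≤ s.1 + s.2) :
    ∃ w, Follows l w s := by
  obtain ⟨i, hi⟩ := H.isHamPath.exists_getElem? hs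
  cases i with
  | zero =>
    have := H.head_level s (by rw [Option.mem_def, List.head?_eq_getElem?]; exact hi)
    omega
  | succ j =>
    have hj : j < l.length := by have := (List.getElem?_eq_some_iff.1 hi).1; omega
    exact ⟨l[j], j, List.getElem?_eq_getElem hj, hi⟩

lemma east_entered_from_south {α β : ℕ} (hlow : α + β + 1 ≤ a) (hα : α + 1 < m)
    (hz : Follows l (α, β) (α, β + 1))
    (hw : Follows l (inverse m n (α + 1, β)) (inverse m n (α, β))) :
    0 < β ∧ Follows l (α + 1, β - 1) (α + 1, β) := by
  have hl := H.isHamPath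
  obtain ⟨-, hβ⟩ : α < m ∧ β + 1 < n := (hl.edge_of_follows hz).sq_right
  have := H.le
  have := H.add_eq
  obtain ⟨v, hv⟩ := H.exists_follows (s := (α + 1, β)) ⟨hα, by omega⟩ (by left; dsimp only; omega)
  rcases hl.follows_cases hv with rfl | heast | hnorth
  · have := hl.follows_right_unique hw hv
    simp only [inverse, Prod.mk.injEq] at this
    omega
  · obtain ⟨v1, v2⟩ := v
    simp only [Prod.mk.injEq] at heast
    obtain ⟨rfl, rfl⟩ : v1 = α ∧ v2 = β := by omega
    have := hl.follows_right_unique hz hv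
    simp only [Prod.mk.injEq] at this
    omega
  · obtain ⟨v1, v2⟩ := v
    simp only [Prod.mk.injEq] at hnorth
    obtain ⟨rfl, rfl⟩ : v1 = α + 1 ∧ v2 = β - 1 := by omega
    exact ⟨by omega, hv⟩

lemma pred_inverse_cases_of_north_low {α β : ℕ} (hlow : α + β + 1 ≤ a)
    (hz : Follows l (α, β) (α, β + 1)) :
    Follows l (inverse m n (α, β + 1)) (inverse m n (α, β)) ∨
      Follows l (inverse m n (α + 1, β)) (inverse m n (α, β)) ∧ 0 < β ∧
        Follows l (α + 1, β - 1) (α + 1, β) := by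
  have hl := H.isHamPath
  obtain ⟨hα, hβ⟩ : α < m ∧ β + 1 < n := (hl.edge_of_follows hz).sq_right
  have := H.le
  have := H.add_eq
  obtain ⟨w, hw⟩ := H.exists_follows (s := inverse m n (α, β))
    (sq_inverse ⟨by omega, by omega⟩) (by right; simp only [inverse]; omega)
  rcases hl.follows_cases hw with rfl | heast | hnorth
  · rw [inverse_inverse ⟨by omega, by omega⟩] at hw
    have := hl.follows_right_unique hz hw
    simp only [inverse, Prod.mk.injEq] at this
    omega
  · obtain ⟨w1, w2⟩ := w
    simp only [inverse, Prod.mk.injEq] at heast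
    obtain ⟨rfl, rfl⟩ : w1 = m - 1 - (α + 1) ∧ w2 = n - 1 - β := by omega
    exact .inr ⟨hw, H.east_entered_from_south hlow (by omega) hz hw⟩
  · obtain ⟨w1, w2⟩ := w
    simp only [inverse, Prod.mk.injEq] at hnorth
    obtain ⟨rfl, rfl⟩ : w1 = m - 1 - α ∧ w2 = n - 1 - (β + 1) := by omega
    exact .inl hw

lemma follows_inverse_of_north_low (β : ℕ) : ∀ α, α + β + 1 ≤ a →
    Follows l (α, β) (α, β + 1) → Follows l (inverse m n (α, β + 1)) (inverse m n (α, β)) := by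
  induction β with
  | zero =>
    intro α hlow hz
    exact (H.pred_inverse_cases_of_north_low hlow hz).resolve_right fun ⟨_, hβ, _⟩ => hβ.false
  | succ β ih =>
    intro α hlow hz
    refine (H.pred_inverse_cases_of_north_low hlow hz).resolve_right fun ⟨hQ, _, hR⟩ => ?_
    obtain ⟨hα, -⟩ : α + 1 < m ∧ β + 1 < n := (H.isHamPath.edge_of_follows hR).sq_right
    have := H.isHamPath.follows_right_unique hQ (ih (α + 1) (by omega) hR)
    simp only [inverse, Prod.mk.injEq] at this
    omega

lemma follows_inverse_of_east_high {p q : ℕ} (hb : b + 1 ≤ p + q)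
    (hx : Follows l (p, q) (p + 1, q)) :
    Follows l (inverse m n (p + 1, q)) (inverse m n (p, q)) := by
  have hl := H.isHamPath
  have hsq := (hl.edge_of_follows hx).1
  obtain ⟨hp, hq⟩ : p + 1 < m ∧ q < n := (hl.edge_of_follows hx).sq_right
  have := H.le
  have := H.add_eq
  obtain ⟨w, hw⟩ := H.exists_follows (sq_inverse hsq) (by left; simp only [inverse]; omega)
  rcases hl.follows_cases hw with rfl | heast | hnorth
  · rw [inverse_inverse hsq] at hw
    have := hl.follows_right_unique hx hw
    simp only [inverse, Prod.mk.injEq] at this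
    omega
  · obtain ⟨w1, w2⟩ := w
    simp only [inverse, Prod.mk.injEq] at heast
    obtain ⟨rfl, rfl⟩ : w1 = m - 1 - (p + 1) ∧ w2 = n - 1 - q := by omega
    exact hw
  · obtain ⟨w1, w2⟩ := w
    simp only [inverse, Prod.mk.injEq] at hnorth
    have hq' : q + 1 < n := by omega
    obtain ⟨rfl, rfl⟩ : w1 = m - 1 - p ∧ w2 = n - 1 - q - 1 := by omega
    rw [show inverse m n (p, q) = (m - 1 - p, n - 1 - q - 1 + 1) by
      simp only [inverse, Prod.mk.injEq, true_and]; omega] at hw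
    have hmirror := H.follows_inverse_of_north_low _ _ (by omega) hw
    rw [show inverse m n (m - 1 - p, n - 1 - q - 1 + 1) = (p, q) by
      simp only [inverse, Prod.mk.injEq]; omega] at hmirror
    have := hl.follows_right_unique hx hmirror
    simp only [inverse, Prod.mk.injEq] at this
    omega

lemma follows_inverse_of_north_high {p q : ℕ} (hb : b + 1 ≤ p + q)
    (hx : Follows l (p, q) (p, q + 1)) :
    Follows l (inverse m n (p, q + 1)) (inverse m n (p, q)) :=
  (follows_map_iff Prod.swap_injective).1 <|
    H.map_swap.follows_inverse_of_east_high (p := q) (q := p) (by omega)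
      ((follows_map_iff Prod.swap_injective).2 hx)

lemma follows_inverse_of_step (hb : b + 1 ≤ s.1 + s.2) (h : Follows l s t)
    (hstep : t = (s.1 + 1, s.2) ∨ t = (s.1, s.2 + 1)) :
    Follows l (inverse m n t) (inverse m n s) := by
  rcases hstep with rfl | rfl
  · exact H.follows_inverse_of_east_high hb h
  · exact H.follows_inverse_of_north_high hb h

lemma reaches_inverse {τ : ℕ × ℕ} (hτ : l.getLast? = some τ) (hτb : τ.1 + τ.2 ≤ b) {i : ℕ}
    (hs : l[i]? = some s) (hb : b + 1 ≤ s.1 + s.2) :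
    ∃ k, i < k ∧ l[k]? = some (inverse m n s) ∧ ∀ j t, i < j → j < k → l[j]? = some t →
      s.1 + s.2 < t.1 + t.2 ∨ t.1 + t.2 + (s.1 + s.2) + 3 ≤ m + n := by
  obtain ⟨c, hc⟩ : ∃ c, m + n - 2 - (s.1 + s.2) < c := ⟨_, Nat.lt_succ_self _⟩
  induction c generalizing s i with
  | zero => omega
  | succ c ih =>
    have hl := H.isHamPath
    obtain ⟨t, ht⟩ := exists_getElem?_succ hs (by rw [hτ]; intro h; cases h; omega)
    have hst : Follows l s t := ⟨i, hs, ht⟩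
    obtain ⟨hs1, hs2⟩ := hl.sq_of_getElem? hs
    obtain ⟨ht1, ht2⟩ := hl.sq_of_getElem? ht
    rcases hl.follows_cases hst with hwrap | hstep
    · refine ⟨i + 1, by omega, ?_, fun j _ _ _ _ => by omega⟩
      rwa [hwrap, inverse_inverse (hl.sq_of_getElem? ht)]
    · have hlevel : t.1 + t.2 = s.1 + s.2 + 1 := by
        rcases hstep with rfl | rfl <;> dsimp only <;> omega
      obtain ⟨k, hik, hk, hmid⟩ := ih ht (by omega) (by omega)
      obtain ⟨r, hr, hr'⟩ := H.follows_inverse_of_step hb hst hstep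
      obtain rfl : r = k := hl.eq_of_getElem? hr hk
      refine ⟨r + 1, by omega, hr', fun j u hij hjr hu => ?_⟩
      rcases (by omega : j = i + 1 ∨ i + 1 < j ∧ j < r ∨ j = r) with rfl | hj | rfl
      · obtain rfl := Option.some_inj.1 (hu.symm.trans ht)
        omega
      · have := hmid j u hj.1 hj.2 hu
        omega
      · obtain rfl := Option.some_inj.1 (hu.symm.trans hk)
        simp only [inverse]
        omega

end StartsInBand

end

theorem outerEastOK_general (m n a b : ℕ)
    (hab : a ≤ b) (habsum : a + b = m + n - 3)
    (l : List (ℕ × ℕ)) (τ : ℕ × ℕ) (hl : IsHamPath m n l) (hτ : l.getLast? = some τ)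
    (hterm : τ.1 + τ.2 = a ∨ τ.1 + τ.2 = b)
    (p q : ℕ) (hsum : p + q = b + 1)
    (i : ℕ) (hi : l[i]? = some (p, q)) :
    ∃ k, i < k ∧ l[k]? = some (m - 1 - p, n - 1 - q) ∧
      ∀ j s, i < j → j < k → l[j]? = some s → s.1 + s.2 ≠ a := by
  obtain ⟨hp, hq⟩ := hl.sq_of_getElem? hi
  have H := StartsInBand.of_terminal hl (by omega) hab habsum hτ hterm
  obtain ⟨k, hik, hk, hmid⟩ := H.reaches_inverse hτ (by omega) hi (by omega)
  refine ⟨k, hik, hk, fun j s hij hjk hs => ?_⟩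
  have := hmid j s hij hjk hs
  dsimp only at this
  omega

theorem outerEastOK (m n a b : ℕ) (hm : 3 ≤ m) (hn : 3 ≤ n)
    (hab : a ≤ b) (habsum : a + b = m + n - 3)
    (l : List (ℕ × ℕ)) (τ : ℕ × ℕ) (hl : IsHamPath m n l) (hτ : l.getLast? = some τ)
    (hterm : τ.1 + τ.2 = a ∨ τ.1 + τ.2 = b)
    (p q : ℕ) (hpq : Sq m n (p, q)) (hsum : p + q = b + 1)
    (i : ℕ) (hi : l[i]? = some (p, q)) :
    ∃ k, i < k ∧ l[k]? = some (m - 1 - p, n - 1 - q) ∧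
      ∀ j s, i < j → j < k → l[j]? = some s → s.1 + s.2 ≠ a :=
  outerEastOK_general m n a b hab habsum l τ hl hτ hterm p q hsum i hi

end ProjBoard
end
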